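/- Let G be an α_i-metric graph and x,y a pair of mutually distant vertices. Then d(x,y) ≥ 2·rad(G)-4i-3 and d(x,y) ≥ diam(G)-3i-2. -/

import Mathlib

/-!
Fix `x, y` with `k = d(x,y)` and cut the interval `I(x,y)` into the slices
`S_a = {v ∈ I(x,y) | d(x,v) = a}`. In an `α_i`-metric graph every slice has diameter at most
`i + 1`, by induction on `a`: two far apart vertices of `S_{a+1}` and a neighbour of one of
them in `S_a` would violate the `α_i` condition. Walking from a slice vertex `v` towards any
vertex `u` one either stays in the slice of `v` or, at the first step leaving it, the `α_i`
condition puts the current vertex almost on a geodesic from `x` or from `y` to `u`. Hence every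
`v ∈ S_a` is within `2i + 1` of lying on a geodesic from `x` or from `y` to `u`. If `x, y` are
mutually distant, the middle slice gives a vertex of eccentricity at most `⌈k/2⌉ + 2i + 1`, and
for any `u, z` the slice where `d(u,x) - a` and `d(u,y) - (k - a)` balance gives
`d(u,z) ≤ k + 3i + 2`.
-/

open SimpleGraph

variable {V : Type*}

/-- `Itv G u v x` means `x` lies on a shortest `(u,v)`-path, i.e. `x ∈ I(u,v)`. -/
def Itv (G : SimpleGraph V) (u v x : V) : Prop :=
  G.dist u x + G.dist x v = G.dist u v

/-- `G` is an `α_i`-metric graph. -/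
def AlphaI (G : SimpleGraph V) (i : ℕ) : Prop :=
  ∀ u v w x : V, Itv G u w v → Itv G v x w → G.Adj v w →
    G.dist u v + G.dist v x ≤ G.dist u x + i

/-- Eccentricity of a vertex. -/
noncomputable def ecc (G : SimpleGraph V) [Fintype V] (v : V) : ℕ :=
  Finset.univ.sup (fun u => G.dist v u)

/-- Radius of the graph. -/
noncomputable def grad (G : SimpleGraph V) [Fintype V] [Nonempty V] : ℕ :=
  Finset.univ.inf' Finset.univ_nonempty (fun v => ecc G v)

/-- Diameter of the graph. -/
noncomputable def gdiam (G : SimpleGraph V) [Fintype V] : ℕ :=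
  Finset.univ.sup (fun v => ecc G v)

def slice (G : SimpleGraph V) (x y : V) (a : ℕ) : Set V :=
  {v | Itv G x y v ∧ G.dist x v = a}

section Metric

variable {G : SimpleGraph V}

theorem SimpleGraph.exists_adj_dist_eq_of_dist_eq_succ {u v : V} {m : ℕ}
    (h : G.dist u v = m + 1) : ∃ w, G.Adj u w ∧ G.dist w v = m := by
  obtain ⟨p, hp⟩ := exists_walk_of_dist_ne_zero (show G.dist u v ≠ 0 by omega)
  cases p with
  | nil => simp at h
  | cons hadj q =>
    refine ⟨_, hadj, ?_⟩
    have hq := dist_le q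
    have htri := q.reachable.dist_triangle_right u
    rw [dist_eq_one_iff_adj.mpr hadj] at htri
    simp only [Walk.length_cons] at hp
    omega

theorem SimpleGraph.Connected.slice_nonempty (hG : G.Connected) (x y : V) {a : ℕ}
    (ha : a ≤ G.dist x y) : (slice G x y a).Nonempty := by
  induction a with
  | zero => exact ⟨x, by simp [slice, Itv]⟩
  | succ a ih =>
    obtain ⟨p, hp, hxp⟩ := ih (by omega)
    obtain ⟨r, hpr, hry⟩ :=
      exists_adj_dist_eq_of_dist_eq_succ (show G.dist p y = G.dist x y - a - 1 + 1 by
        unfold Itv at hp; omega)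
    have := hG.dist_triangle (u := x) (v := p) (w := r)
    have := hG.dist_triangle (u := x) (v := r) (w := y)
    have := dist_eq_one_iff_adj.mpr hpr
    exact ⟨r, by unfold Itv; omega, by omega⟩

end Metric

namespace AlphaI

variable {G : SimpleGraph V} {i : ℕ}

theorem dist_add_dist_le_of_adj (hα : AlphaI G i) {u v w z : V} (hvw : G.Adj v w)
    (huw : G.dist u v + 1 = G.dist u w) (hvz : G.dist w z + 1 = G.dist v z) :
    G.dist u v + G.dist v z ≤ G.dist u z + i := by
  have := dist_eq_one_iff_adj.mpr hvw
  exact hα u v w z (by unfold Itv; omega) (by unfold Itv; omega) hvw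

theorem dist_le_of_mem_slice_succ (hα : AlphaI G i) (hG : G.Connected) {x y u v : V} {a : ℕ}
    (hslice : ∀ u' ∈ slice G x y a, ∀ v' ∈ slice G x y a, G.dist u' v' ≤ i + 1)
    (hu : u ∈ slice G x y a) (hv : v ∈ slice G x y (a + 1)) : G.dist u v ≤ i + 1 := by
  obtain ⟨hu, hxu⟩ := hu
  obtain ⟨hv, hxv⟩ := hv
  unfold Itv at hu hv
  obtain ⟨t, hvt, htx⟩ :=
    exists_adj_dist_eq_of_dist_eq_succ (show G.dist v x = a + 1 by rwa [SimpleGraph.dist_comm])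
  have := dist_eq_one_iff_adj.mpr hvt
  have := dist_eq_one_iff_adj.mpr hvt.symm
  have := hG.dist_triangle (u := t) (v := v) (w := y)
  have := hG.dist_triangle (u := x) (v := t) (w := y)
  have hxt : G.dist x t = a := by rw [SimpleGraph.dist_comm]; exact htx
  have hty : G.dist t y = G.dist v y + 1 := by omega
  have hut := hslice u ⟨hu, hxu⟩ t ⟨by unfold Itv; omega, hxt⟩
  have := hG.dist_triangle (u := u) (v := t) (w := v)
  by_contra! h
  -- Now `t ∈ I(u,v)` and `v ∈ I(t,y)`, so `α_i` bounds `d(u,t) + d(t,y)`, but `d(t,y) = d(u,y)`.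
  have := hα.dist_add_dist_le_of_adj (u := u) (z := y) hvt.symm (by omega) (by omega)
  omega

theorem dist_le_of_mem_slice (hα : AlphaI G i) (hG : G.Connected) {x y u v : V} {a : ℕ}
    (hu : u ∈ slice G x y a) (hv : v ∈ slice G x y a) : G.dist u v ≤ i + 1 := by
  induction a generalizing u v with
  | zero =>
    obtain rfl := (hG.dist_eq_zero_iff.mp hu.2).symm
    obtain rfl := (hG.dist_eq_zero_iff.mp hv.2).symm
    simp
  | succ a ih =>
    obtain ⟨hu', hxu⟩ := hu
    obtain ⟨hv', hxv⟩ := hv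
    unfold Itv at hu' hv'
    obtain ⟨p, hup, hpx⟩ :=
      exists_adj_dist_eq_of_dist_eq_succ (show G.dist u x = a + 1 by rwa [SimpleGraph.dist_comm])
    have hxp : G.dist x p = a := by rw [SimpleGraph.dist_comm]; exact hpx
    have := dist_eq_one_iff_adj.mpr hup
    have := dist_eq_one_iff_adj.mpr hup.symm
    have := hG.dist_triangle (u := x) (v := p) (w := y)
    have := hG.dist_triangle (u := p) (v := u) (w := y)
    have hpy : G.dist p y = G.dist u y + 1 := by omega
    have hvu := SimpleGraph.dist_comm (G := G) (u := v) (v := u)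
    have hvp := SimpleGraph.dist_comm (G := G) (u := v) (v := p)
    by_contra! h
    rcases hup.diff_dist_adj (u := v) with hc | hc | hc
    · have := hα.dist_le_of_mem_slice_succ hG (fun _ hu _ hv => ih hu hv)
        ⟨by unfold Itv; omega, hxp⟩ ⟨hv', hxv⟩
      omega
    · have := hα.dist_add_dist_le_of_adj (u := x) (z := v) hup.symm (by omega) (by omega)
      omega
    · have := hα.dist_add_dist_le_of_adj (u := v) (z := y) hup.symm (by omega) (by omega)
      omega


theorem exists_mem_slice_dist_add_le (hα : AlphaI G i) (hG : G.Connected) {x y v : V} {a : ℕ}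
    (hv : v ∈ slice G x y a) (z : V) : ∃ q ∈ slice G x y a,
      G.dist x q + G.dist q z ≤ G.dist x z + i ∨ G.dist y q + G.dist q z ≤ G.dist y z + i := by
  obtain ⟨n, hn⟩ : ∃ n, G.dist v z = n := ⟨_, rfl⟩
  induction n generalizing v with
  | zero =>
    obtain rfl := hG.dist_eq_zero_iff.mp hn
    exact ⟨v, hv, .inl (by simp)⟩
  | succ n ih =>
    obtain ⟨hv', hxv⟩ := hv
    unfold Itv at hv'
    obtain ⟨r, hvr, hrz⟩ := exists_adj_dist_eq_of_dist_eq_succ hn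
    have := dist_eq_one_iff_adj.mpr hvr
    have := dist_eq_one_iff_adj.mpr hvr.symm
    have := hG.dist_triangle (u := x) (v := v) (w := r)
    have := hG.dist_triangle (u := x) (v := r) (w := v)
    have := hG.dist_triangle (u := y) (v := v) (w := r)
    have := hG.dist_triangle (u := y) (v := r) (w := v)
    have := hG.dist_triangle (u := x) (v := r) (w := y)
    have hyv := SimpleGraph.dist_comm (G := G) (u := y) (v := v)
    have hyr := SimpleGraph.dist_comm (G := G) (u := y) (v := r)
    by_cases hxr : G.dist x r = G.dist x v + 1
    · exact ⟨v, ⟨hv', hxv⟩, .inl (hα.dist_add_dist_le_of_adj hvr hxr.symm (by omega))⟩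
    by_cases hyr' : G.dist y r = G.dist y v + 1
    · exact ⟨v, ⟨hv', hxv⟩, .inr (hα.dist_add_dist_le_of_adj hvr hyr'.symm (by omega))⟩
    exact ih ⟨by unfold Itv; omega, by omega⟩ hrz

theorem dist_add_le_or_dist_add_le (hα : AlphaI G i) (hG : G.Connected) {x y v : V} {a : ℕ}
    (hv : v ∈ slice G x y a) (u : V) :
    G.dist x v + G.dist v u ≤ G.dist x u + 2 * i + 1 ∨
      G.dist y v + G.dist v u ≤ G.dist y u + 2 * i + 1 := by
  obtain ⟨q, hq, hqu⟩ := hα.exists_mem_slice_dist_add_le hG hv u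
  have hvq := hα.dist_le_of_mem_slice hG hv hq
  have := hG.dist_triangle (u := v) (v := q) (w := u)
  obtain ⟨hv', hxv⟩ := hv
  obtain ⟨hq', hxq⟩ := hq
  unfold Itv at hv' hq'
  have := SimpleGraph.dist_comm (G := G) (u := y) (v := v)
  have := SimpleGraph.dist_comm (G := G) (u := y) (v := q)
  omega

end AlphaI

section Eccentricity

variable [Fintype V] {G : SimpleGraph V}

theorem dist_le_ecc (v u : V) : G.dist v u ≤ ecc G v :=
  Finset.le_sup (f := fun u => G.dist v u) (Finset.mem_univ u)

theorem ecc_le {v : V} {n : ℕ} (h : ∀ u, G.dist v u ≤ n) : ecc G v ≤ n :=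
  Finset.sup_le fun u _ => h u

theorem grad_le_ecc [Nonempty V] (v : V) : grad G ≤ ecc G v :=
  Finset.inf'_le _ (Finset.mem_univ v)

theorem gdiam_le {n : ℕ} (h : ∀ u v, G.dist u v ≤ n) : gdiam G ≤ n :=
  Finset.sup_le fun u _ => ecc_le (h u)

end Eccentricity

namespace AlphaI

variable {G : SimpleGraph V} {i : ℕ} {x y : V}

theorem exists_forall_dist_le (hα : AlphaI G i) (hG : G.Connected)
    (hx : ∀ z, G.dist x z ≤ G.dist x y) (hy : ∀ z, G.dist y z ≤ G.dist x y) :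
    ∃ c, ∀ z, G.dist c z ≤ (G.dist x y + 1) / 2 + 2 * i + 1 := by
  obtain ⟨c, hc⟩ := hG.slice_nonempty x y (a := G.dist x y / 2) (by omega)
  refine ⟨c, fun z => ?_⟩
  have hcz := hα.dist_add_le_or_dist_add_le hG hc z
  obtain ⟨hc', hxc⟩ := hc
  unfold Itv at hc'
  have := SimpleGraph.dist_comm (G := G) (u := y) (v := c)
  have := hx z
  have := hy z
  omega

theorem dist_le_of_forall_dist_le (hα : AlphaI G i) (hG : G.Connected)
    (hx : ∀ z, G.dist x z ≤ G.dist x y) (hy : ∀ z, G.dist y z ≤ G.dist x y) (u z : V) :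
    G.dist u z ≤ G.dist x y + 3 * i + 2 := by
  -- In the slice `a`, `d(u,x) - a` and `d(u,y) - (d(x,y) - a)` differ by at most one.
  set a := (G.dist x y + G.dist x u - G.dist y u + 1) / 2
  have := hx u
  obtain ⟨v, hv⟩ := hG.slice_nonempty x y (a := a) (by omega)
  obtain ⟨q, hq, hqz⟩ := hα.exists_mem_slice_dist_add_le hG hv z
  have hqu := hα.dist_add_le_or_dist_add_le hG hq u
  have := hG.dist_triangle (u := u) (v := q) (w := z)
  obtain ⟨hq', hxq⟩ := hq
  unfold Itv at hq'
  have := SimpleGraph.dist_comm (G := G) (u := y) (v := q)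
  have := SimpleGraph.dist_comm (G := G) (u := u) (v := q)
  have := hx z
  have := hy z
  have := hy u
  omega

end AlphaI

theorem stmt_8 [Fintype V] [Nonempty V] (G : SimpleGraph V) (hG : G.Connected) (i : ℕ)
    (hα : AlphaI G i) (x y : V)
    (hx : ecc G x = G.dist x y) (hy : ecc G y = G.dist x y) :
    2 * grad G ≤ G.dist x y + 4 * i + 3 ∧ gdiam G ≤ G.dist x y + 3 * i + 2 := by
  have hx' : ∀ z, G.dist x z ≤ G.dist x y := fun z => hx ▸ dist_le_ecc x z
  have hy' : ∀ z, G.dist y z ≤ G.dist x y := fun z => hy ▸ dist_le_ecc y z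
  obtain ⟨c, hc⟩ := hα.exists_forall_dist_le hG hx' hy'
  have hrad := (grad_le_ecc (G := G) c).trans (ecc_le hc)
  exact ⟨by omega, gdiam_le (hα.dist_le_of_forall_dist_le hG hx' hy')⟩
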